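/- Let Phi(x,y) = Σ_{n≥1} Σ_{[S,T]∈I_n} x^{L(T)} y^n, where I_n is the set of Tamari intervals in Y_n and L(T) is the number of segments along the left border of T, and let phi(y) = Phi(1,y). Then Phi = x^2 y (1 + Phi/x)(1 + (Phi − phi)/(x−1)). -/

import Mathlib

/-- Planar binary trees, counted by internal nodes. -/
inductive PBT where
  | leaf : PBT
  | node : PBT → PBT → PBT
deriving DecidableEq

namespace PBT

/-- Number of internal nodes. -/
def size : PBT → ℕ
  | leaf => 0
  | node l r => size l + size r + 1

/-- One rotation step, going up in the Tamari order: a right comb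
configuration `a·(b·c)` is replaced by a left comb configuration `(a·b)·c`,
possibly deep inside the tree. -/
inductive Rot : PBT → PBT → Prop
  | rotate (a b c : PBT) : Rot (node a (node b c)) (node (node a b) c)
  | left {l l' : PBT} (r : PBT) : Rot l l' → Rot (node l r) (node l' r)
  | right (l : PBT) {r r' : PBT} : Rot r r' → Rot (node l r) (node l r')

/-- The Tamari order: the reflexive-transitive closure of rotation. -/
def le (S T : PBT) : Prop := Relation.ReflTransGen Rot S T

/-- The unique tree with one internal node. -/
def Y : PBT := node leaf leaf

/-- `S / T`: graft the root of `S` onto the leftmost leaf of `T`. -/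
def graftL : PBT → PBT → PBT
  | S, leaf => S
  | S, node l r => node (graftL S l) r

/-- `T₁ / T₂ / ⋯ / T_k` for a list of trees (the empty graft is the trivial tree). -/
def listGraft (L : List PBT) : PBT := L.foldr graftL leaf

/-- A (nontrivial) tree is indecomposable if it is not of the form `S / T`
with `S`, `T` both nontrivial. -/
def Indec (T : PBT) : Prop :=
  T ≠ leaf ∧ ¬ ∃ S U : PBT, S ≠ leaf ∧ U ≠ leaf ∧ graftL S U = T

end PBT

/-- A pair `(S,T)` is a Tamari interval when `S ≤ T`. -/
def isItv (p : PBT × PBT) : Prop := PBT.le p.1 p.2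

/-- Grafting of intervals, componentwise on minima and maxima:
`J/K = [min J / min K, max J / max K]`. -/
def igraft (p q : PBT × PBT) : PBT × PBT := (PBT.graftL p.1 q.1, PBT.graftL p.2 q.2)

/-- `I₁ / I₂ / ⋯ / I_k` for a list of intervals. -/
def ilistGraft (L : List (PBT × PBT)) : PBT × PBT := L.foldr igraft (PBT.leaf, PBT.leaf)

/-- An interval is indecomposable if it is nontrivial and is not the graft `J/K`
of two nontrivial intervals. -/
def IndecItv (p : PBT × PBT) : Prop :=
  isItv p ∧ p.1 ≠ PBT.leaf ∧
    ¬ ∃ q r : PBT × PBT, isItv q ∧ isItv r ∧ q.1 ≠ PBT.leaf ∧ r.1 ≠ PBT.leaf ∧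
      igraft q r = p

namespace PBT

/-- `Lb T`: the number of segments along the left border of `T`
(the edges on the path from the root to the leftmost leaf); `Lb Y = 2`. -/
def Lb : PBT → ℕ
  | leaf => 1
  | node l _ => Lb l + 1

/-- `addLeft s T`: attach a new left edge at segment `s` (numbered from the root,
starting at `0`) of the left border of `T`. -/
def addLeft : ℕ → PBT → PBT
  | 0, T => node leaf T
  | _ + 1, leaf => leaf
  | s + 1, node l r => node (addLeft s l) r

end PBT

open PowerSeries

/-- The refined generating series `Φ(x,y) = Σ_{n≥1} Σ_{[S,T] ∈ I_n} x^{L(T)} yⁿ`,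
as a power series in `y` with polynomial coefficients in `x`. -/
noncomputable def Phi : PowerSeries (Polynomial ℚ) :=
  PowerSeries.mk fun n => if n = 0 then 0 else
    ∑ᶠ p : {p : PBT × PBT // p.1.size = n ∧ p.2.size = n ∧ isItv p},
      (Polynomial.X : Polynomial ℚ) ^ PBT.Lb (p.1).2

/-- The generating series `φ(y) = Φ(1,y) = Σ_{n≥1} |I_n| yⁿ`. -/
noncomputable def phi : PowerSeries (Polynomial ℚ) :=
  PowerSeries.mk fun n => if n = 0 then 0 else
    (Nat.card {p : PBT × PBT // p.1.size = n ∧ p.2.size = n ∧ isItv p} :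
      Polynomial ℚ)

/-!
Every nontrivial interval factors uniquely as `J / K` with `J` indecomposable: the lower tree
splits uniquely at the lowest node of its left border, and everything above `A / B` in the
Tamari order is again a graft `A' / B'` with `A ≤ A'` and `B ≤ B'`. As
`L(A' / B') = L(A') + L(B') - 1`, this gives `x Φ = Ψ (x + Φ)`, where `Ψ` counts indecomposable
intervals. An indecomposable interval is `[leaf·S', addLeft j T']` for an interval `[S', T']` and
a segment `j < L(T')` of the left border of `T'`, and then `L = j + 2`; summing `x^(j+2)` over `j`
gives `x² (x^L(T') - 1) / (x - 1)`, so `Ψ (x - 1) = x² y (x - 1 + Φ - φ)`. Eliminating `Ψ` gives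
the equation.
-/

open scoped Polynomial

namespace PBT

theorem size_eq_zero {T : PBT} : T.size = 0 ↔ T = leaf := by
  cases T <;> simp [size]

theorem size_graftL (A B : PBT) : (graftL A B).size = A.size + B.size := by
  induction B with
  | leaf => rfl
  | node l r ih => simp only [graftL, size, ih]; omega

theorem Lb_graftL (A B : PBT) : Lb (graftL A B) + 1 = Lb A + Lb B := by
  induction B with
  | leaf => rfl
  | node l r ih => simp only [graftL, Lb]; omega

theorem Rot.size_eq {S T : PBT} (h : Rot S T) : S.size = T.size := by
  induction h <;> simp only [size] <;> omega

theorem le.size_eq {S T : PBT} (h : le S T) : S.size = T.size := by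
  induction h with
  | refl => rfl
  | tail _ hstep ih => exact ih.trans hstep.size_eq

theorem Rot.ne_leaf {S T : PBT} (h : Rot S T) : S ≠ leaf ∧ T ≠ leaf := by
  cases h <;> simp

theorem Rot.graftL_left {A A' : PBT} (B : PBT) (h : Rot A A') :
    Rot (graftL A B) (graftL A' B) := by
  induction B with
  | leaf => exact h
  | node l r ih => exact Rot.left r ih

theorem Rot.graftL_right (A : PBT) {B B' : PBT} (h : Rot B B') :
    Rot (graftL A B) (graftL A B') := by
  induction h with
  | rotate a b c => exact Rot.rotate (graftL A a) b c
  | left r _ ih => exact Rot.left r ih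
  | right l h => exact Rot.right (graftL A l) h

theorem graftL_le_graftL {A A' B B' : PBT} (hA : le A A') (hB : le B B') :
    le (graftL A B) (graftL A' B') :=
  (hA.lift (graftL · B) fun _ _ h => h.graftL_left B).trans
    (hB.lift (graftL A' ·) fun _ _ h => h.graftL_right A')

theorem Rot.exists_graftL {A B C : PBT} (h : Rot (graftL A B) C) :
    ∃ A' B', C = graftL A' B' ∧ (Rot A A' ∧ B' = B ∨ A' = A ∧ Rot B B') := by
  induction B generalizing C with
  | leaf => exact ⟨C, leaf, rfl, .inl ⟨h, rfl⟩⟩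
  | node l r ih _ =>
    cases h with
    | rotate _ b c => exact ⟨A, node (node l b) c, rfl, .inr ⟨rfl, .rotate l b c⟩⟩
    | left r h =>
      obtain ⟨A', l', rfl, ⟨hA, hl'⟩ | ⟨rfl, hl⟩⟩ := ih h
      · exact ⟨A', node l r, by rw [hl']; rfl, .inl ⟨hA, rfl⟩⟩
      · exact ⟨A', node l' r, rfl, .inr ⟨rfl, .left r hl⟩⟩
    | right _ h => exact ⟨A, node l _, rfl, .inr ⟨rfl, .right l h⟩⟩

theorem le.exists_graftL {A B T : PBT} (h : le (graftL A B) T) :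
    ∃ A' B', T = graftL A' B' ∧ le A A' ∧ le B B' := by
  induction h with
  | refl => exact ⟨A, B, rfl, .refl, .refl⟩
  | tail _ hstep ih =>
    obtain ⟨A', B', rfl, hA, hB⟩ := ih
    obtain ⟨A'', B'', rfl, ⟨hA', rfl⟩ | ⟨rfl, hB'⟩⟩ := hstep.exists_graftL
    · exact ⟨A'', B'', rfl, hA.tail hA', hB⟩
    · exact ⟨A'', B'', rfl, hA, hB.tail hB'⟩

theorem graftL_inj_of_size_eq {A A' B B' : PBT} (h : graftL A B = graftL A' B')
    (hs : A.size = A'.size) : A = A' ∧ B = B' := by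
  induction B generalizing B' with
  | leaf =>
    cases B' with
    | leaf => exact ⟨h, rfl⟩
    | node u v => have := congrArg size h; simp only [graftL, size, size_graftL] at this; omega
  | node l r ih _ =>
    cases B' with
    | leaf => have := congrArg size h; simp only [graftL, size, size_graftL] at this; omega
    | node u v =>
      simp only [graftL, node.injEq] at h
      obtain ⟨rfl, rfl⟩ := ih h.1
      exact ⟨rfl, by rw [h.2]⟩

theorem graftL_inj_of_Lb_eq {A A' B B' : PBT} (h : graftL A B = graftL A' B')
    (hL : Lb B = Lb B') : A = A' ∧ B = B' := by
  induction B generalizing B' with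
  | leaf =>
    cases B' with
    | leaf => exact ⟨h, rfl⟩
    | node u v => cases u <;> simp [Lb] at hL
  | node l r ih _ =>
    cases B' with
    | leaf => cases l <;> simp [Lb] at hL
    | node u v =>
      simp only [graftL, node.injEq] at h
      obtain ⟨rfl, rfl⟩ := ih h.1 (by simpa [Lb] using hL)
      exact ⟨rfl, by rw [h.2]⟩

theorem exists_eq_graftL_node_leaf {S : PBT} (hS : S ≠ leaf) :
    ∃ r B, S = graftL (node leaf r) B := by
  induction S with
  | leaf => exact absurd rfl hS
  | node l r ih _ =>
    by_cases hl : l = leaf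
    · exact ⟨r, leaf, by rw [hl]; rfl⟩
    · obtain ⟨r₀, B, rfl⟩ := ih hl
      exact ⟨r₀, node B r, rfl⟩

/-- Replaces the lowest node `node leaf r` of the left border by `r`; a left inverse of
every `addLeft j`. -/
def removeLeft : PBT → PBT
  | leaf => leaf
  | node leaf r => r
  | node (node a b) r => node (removeLeft (node a b)) r

theorem removeLeft_node {l : PBT} (hl : l ≠ leaf) (r : PBT) :
    removeLeft (node l r) = node (removeLeft l) r := by
  cases l with
  | leaf => exact absurd rfl hl
  | node a b => rfl

theorem Rot.removeLeft {U V : PBT} (h : Rot U V) : le (removeLeft U) (removeLeft V) := by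
  induction h with
  | rotate a b c =>
    cases a with
    | leaf => exact .refl
    | node a₁ a₂ => exact .single (.rotate _ b c)
  | left r h ih =>
    rw [removeLeft_node h.ne_leaf.1, removeLeft_node h.ne_leaf.2]
    exact ih.lift (node · r) fun _ _ h => .left r h
  | right l h =>
    cases l with
    | leaf => exact .single h
    | node a b => exact .single (.right _ h)

theorem le.removeLeft {U V : PBT} (h : le U V) : le (removeLeft U) (removeLeft V) := by
  induction h with
  | refl => exact .refl
  | tail _ hstep ih => exact ih.trans hstep.removeLeft

theorem addLeft_ne_leaf {j : ℕ} {T : PBT} (h : j < Lb T) : addLeft j T ≠ leaf := by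
  cases j with
  | zero => simp [addLeft]
  | succ j => cases T with
    | leaf => simp [Lb] at h
    | node l r => simp [addLeft]

theorem Lb_addLeft {j : ℕ} {T : PBT} (h : j < Lb T) : Lb (addLeft j T) = j + 2 := by
  induction j generalizing T with
  | zero => rfl
  | succ j ih => cases T with
    | leaf => simp [Lb] at h
    | node l r => simp only [addLeft, Lb, ih (by simpa [Lb] using h)]

theorem size_addLeft {j : ℕ} {T : PBT} (h : j < Lb T) : (addLeft j T).size = T.size + 1 := by
  induction j generalizing T with
  | zero => simp [addLeft, size]
  | succ j ih => cases T with
    | leaf => simp [Lb] at h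
    | node l r => simp only [addLeft, size, ih (by simpa [Lb] using h)]; omega

theorem removeLeft_addLeft {j : ℕ} {T : PBT} (h : j < Lb T) : removeLeft (addLeft j T) = T := by
  induction j generalizing T with
  | zero => rfl
  | succ j ih => cases T with
    | leaf => simp [Lb] at h
    | node l r =>
      have hl : j < Lb l := by simpa [Lb] using h
      rw [addLeft, removeLeft_node (addLeft_ne_leaf hl), ih hl]

theorem exists_eq_addLeft {T : PBT} (hT : T ≠ leaf) : ∃ j T', j < Lb T' ∧ T = addLeft j T' := by
  induction T with
  | leaf => exact absurd rfl hT
  | node l r ih _ =>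
    by_cases hl : l = leaf
    · exact ⟨0, r, Nat.pos_of_ne_zero (by cases r <;> simp [Lb]), by rw [hl]; rfl⟩
    · obtain ⟨j, T', hj, rfl⟩ := ih hl
      exact ⟨j + 1, node T' r, by simpa [Lb] using hj, rfl⟩

theorem Rot.addLeft_succ {j : ℕ} {T : PBT} (h : j + 1 < Lb T) :
    Rot (addLeft j T) (addLeft (j + 1) T) := by
  induction j generalizing T with
  | zero => cases T with
    | leaf => simp [Lb] at h
    | node l r => exact .rotate leaf l r
  | succ j ih => cases T with
    | leaf => simp [Lb] at h
    | node l r => exact .left r (ih (by simpa [Lb] using h))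

theorem node_leaf_le_addLeft {S T : PBT} {j : ℕ} (hST : le S T) (hj : j < Lb T) :
    le (node leaf S) (addLeft j T) := by
  induction j with
  | zero => exact hST.lift (node leaf) fun _ _ h => .right leaf h
  | succ j ih => exact (ih (by omega)).tail (.addLeft_succ hj)

end PBT

open PBT Finset

theorem indecItv_iff {p : PBT × PBT} : IndecItv p ↔ isItv p ∧ ∃ r, p.1 = node leaf r := by
  obtain ⟨S, T⟩ := p
  constructor
  · rintro ⟨hST, hS, hdec⟩
    refine ⟨hST, ?_⟩
    cases S with
    | leaf => exact absurd rfl hS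
    | node l r =>
      by_contra! hl
      have hl : l ≠ leaf := fun h => hl r (by rw [h])
      obtain ⟨r₀, B, rfl⟩ := exists_eq_graftL_node_leaf hl
      obtain ⟨A', B', rfl, hA, hB⟩ := le.exists_graftL (B := node B r) hST
      exact hdec ⟨(_, A'), (_, B'), hA, hB, by simp, by simp, rfl⟩
  · rintro ⟨hST, r, rfl⟩
    refine ⟨hST, by simp, ?_⟩
    rintro ⟨⟨A, A'⟩, ⟨B, B'⟩, -, -, hA, hB, hgraft⟩
    obtain ⟨u, v, rfl⟩ : ∃ u v, B = node u v := by cases B <;> simp_all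
    simp only [igraft, graftL, Prod.mk.injEq, node.injEq] at hgraft
    have := congrArg size hgraft.1.1
    simp only [size, size_graftL] at this
    exact hA (size_eq_zero.mp (show A.size = 0 by omega))

theorem PBT.finite_size_le (n : ℕ) : {T : PBT | T.size ≤ n}.Finite := by
  induction n with
  | zero =>
    exact (Set.finite_singleton leaf).subset fun T hT => size_eq_zero.mp (by simpa using hT)
  | succ n ih =>
    refine ((Set.finite_singleton leaf).union (ih.image2 node ih)).subset ?_
    rintro (_ | ⟨l, r⟩) hT
    · exact .inl rfl
    · simp only [Set.mem_ofPred_eq, size] at hT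
      exact .inr ⟨l, by simp only [Set.mem_ofPred_eq]; omega,
        r, by simp only [Set.mem_ofPred_eq]; omega, rfl⟩

theorem finite_intervals (n : ℕ) :
    {p : PBT × PBT | p.1.size = n ∧ p.2.size = n ∧ isItv p}.Finite :=
  ((finite_size_le n).prod (finite_size_le n)).subset fun _ hp => ⟨hp.1.le, hp.2.1.le⟩

noncomputable def intervals (n : ℕ) : Finset (PBT × PBT) := (finite_intervals n).toFinset

theorem mem_intervals {n : ℕ} {p : PBT × PBT} :
    p ∈ intervals n ↔ p.1.size = n ∧ p.2.size = n ∧ isItv p := by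
  simp [intervals]

open Classical in
noncomputable def indecIntervals (n : ℕ) : Finset (PBT × PBT) := (intervals n).filter IndecItv

theorem mem_indecIntervals {n : ℕ} {p : PBT × PBT} :
    p ∈ indecIntervals n ↔ p ∈ intervals n ∧ IndecItv p := by
  simp [indecIntervals]

theorem intervals_zero : intervals 0 = {(leaf, leaf)} := by
  ext ⟨S, T⟩
  simp only [mem_intervals, size_eq_zero, mem_singleton, Prod.mk.injEq]
  exact ⟨fun h => ⟨h.1, h.2.1⟩, fun ⟨h₁, h₂⟩ => ⟨h₁, h₂, by rw [h₁, h₂]; exact .refl⟩⟩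

theorem indecIntervals_zero : indecIntervals 0 = ∅ := by
  ext ⟨S, T⟩
  simp only [mem_indecIntervals, intervals_zero, mem_singleton, Prod.mk.injEq,
    notMem_empty, iff_false, not_and]
  rintro ⟨rfl, rfl⟩ ⟨-, h, -⟩
  exact h rfl

noncomputable def borderPoly (s : Finset (PBT × PBT)) : ℚ[X] :=
  ∑ p ∈ s, Polynomial.X ^ Lb p.2

theorem X_mul_borderPoly_intervals {n : ℕ} (hn : n ≠ 0) :
    Polynomial.X * borderPoly (intervals n) = ∑ ab ∈ antidiagonal n,
      borderPoly (indecIntervals ab.1) * borderPoly (intervals ab.2) := by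
  simp only [borderPoly, sum_mul_sum, ← sum_product']
  rw [sum_sigma', mul_sum]
  symm
  refine sum_bij (fun x _ => igraft x.2.1 x.2.2) ?_ ?_ ?_ ?_
  · rintro ⟨⟨a, b⟩, ⟨A, A'⟩, ⟨B, B'⟩⟩ hx
    simp only [mem_sigma, HasAntidiagonal.mem_antidiagonal, mem_product, mem_indecIntervals,
      mem_intervals] at hx
    obtain ⟨rfl, ⟨⟨rfl, hA', hA⟩, -⟩, rfl, hB', hB⟩ := hx
    simp only [mem_intervals, igraft, size_graftL, true_and]
    exact ⟨by omega, graftL_le_graftL hA hB⟩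
  · rintro ⟨⟨a, b⟩, ⟨A, A'⟩, ⟨B, B'⟩⟩ hx ⟨⟨c, d⟩, ⟨C, C'⟩, ⟨D, D'⟩⟩ hy heq
    simp only [mem_sigma, HasAntidiagonal.mem_antidiagonal, mem_product, mem_indecIntervals,
      mem_intervals] at hx hy
    obtain ⟨-, ⟨⟨rfl, hA', -⟩, hAind⟩, rfl, -⟩ := hx
    obtain ⟨-, ⟨⟨rfl, hC', -⟩, hCind⟩, rfl, -⟩ := hy
    obtain ⟨s, rfl⟩ := (indecItv_iff.mp hAind).2
    obtain ⟨t, rfl⟩ := (indecItv_iff.mp hCind).2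
    simp only [igraft, Prod.mk.injEq] at heq
    -- both bottom factors have `Lb = 2`, so the lower grafts split at equal depth, and then the
    -- upper ones at equal size
    have hLb := Lb_graftL (node leaf s) B
    rw [heq.1, Lb_graftL] at hLb
    obtain ⟨hAC, rfl⟩ := graftL_inj_of_Lb_eq heq.1 (by simp only [Lb] at hLb; omega)
    obtain ⟨rfl, rfl⟩ := graftL_inj_of_size_eq heq.2 (by rw [hA', hC', hAC])
    rw [hAC]
  · rintro ⟨S, T⟩ hp
    rw [mem_intervals] at hp
    obtain ⟨hS, hT, hST⟩ := hp
    obtain ⟨r, B, rfl⟩ := exists_eq_graftL_node_leaf (S := S) (by rintro rfl; exact hn hS.symm)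
    obtain ⟨A', B', rfl, hA, hB⟩ := le.exists_graftL hST
    refine ⟨⟨((node leaf r).size, B.size), (node leaf r, A'), (B, B')⟩, ?_, rfl⟩
    simp only [mem_sigma, HasAntidiagonal.mem_antidiagonal, mem_product, mem_indecIntervals,
      mem_intervals, indecItv_iff, isItv, true_and]
    rw [size_graftL] at hS hT
    exact ⟨hS, ⟨⟨hA.size_eq.symm, hA⟩, hA, r, rfl⟩, hB.size_eq.symm, hB⟩
  · rintro ⟨ab, A, B⟩ -
    rw [← pow_succ', ← pow_add, igraft, Lb_graftL]

theorem borderPoly_indecIntervals_succ (n : ℕ) :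
    borderPoly (indecIntervals (n + 1)) =
      ∑ q ∈ (intervals n).sigma (fun p => range (Lb p.2)), Polynomial.X ^ (q.2 + 2) := by
  symm
  refine sum_bij (fun q _ => (node leaf q.1.1, addLeft q.2 q.1.2)) ?_ ?_ ?_ ?_
  · rintro ⟨⟨S, T⟩, j⟩ hq
    simp only [mem_sigma, mem_range, mem_intervals] at hq
    obtain ⟨⟨rfl, hT, hST⟩, hj⟩ := hq
    simp only [mem_indecIntervals, mem_intervals, indecItv_iff, isItv, size, size_addLeft hj]
    exact ⟨⟨by omega, by omega, node_leaf_le_addLeft hST hj⟩, node_leaf_le_addLeft hST hj, _, rfl⟩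
  · rintro ⟨⟨S, T⟩, j⟩ hq ⟨⟨S', T'⟩, j'⟩ hq' heq
    simp only [mem_sigma, mem_range] at hq hq'
    simp only [Prod.mk.injEq, node.injEq, true_and] at heq
    obtain ⟨rfl, hT⟩ := heq
    have hj : j = j' := by
      have := congrArg Lb hT
      rw [Lb_addLeft hq.2, Lb_addLeft hq'.2] at this
      omega
    subst hj
    rw [← removeLeft_addLeft hq.2, hT, removeLeft_addLeft hq'.2]
  · rintro ⟨S, T⟩ hp
    simp only [mem_indecIntervals, mem_intervals, indecItv_iff] at hp
    obtain ⟨⟨hS, hT, -⟩, hST, S', rfl⟩ := hp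
    obtain ⟨j, T', hj, rfl⟩ := exists_eq_addLeft (T := T) (by rintro rfl; simp [size] at hT)
    have hST' : PBT.le S' T' := by simpa [removeLeft, removeLeft_addLeft hj] using hST.removeLeft
    refine ⟨⟨(S', T'), j⟩, ?_, rfl⟩
    simp only [mem_sigma, mem_range, mem_intervals]
    simp only [size, size_addLeft hj] at hS hT
    exact ⟨⟨by omega, by omega, hST'⟩, hj⟩
  · rintro ⟨⟨S, T⟩, j⟩ hq
    rw [Lb_addLeft (mem_range.mp (mem_sigma.mp hq).2)]

theorem borderPoly_indecIntervals_succ_mul (n : ℕ) :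
    borderPoly (indecIntervals (n + 1)) * (Polynomial.X - 1) =
      Polynomial.X ^ 2 * ∑ p ∈ intervals n, (Polynomial.X ^ Lb p.2 - 1) := by
  rw [borderPoly_indecIntervals_succ, sum_sigma, sum_mul, mul_sum]
  refine sum_congr rfl fun p _ => ?_
  simp only [pow_add, ← sum_mul]
  rw [← geom_sum_mul]
  ring

noncomputable def intervalSeries : PowerSeries ℚ[X] := mk fun n => borderPoly (intervals n)

noncomputable def intervalCountSeries : PowerSeries ℚ[X] := mk fun n => ((intervals n).card : ℚ[X])

noncomputable def indecSeries : PowerSeries ℚ[X] := mk fun n => borderPoly (indecIntervals n)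

theorem coeff_Phi (n : ℕ) : coeff n Phi = if n = 0 then 0 else borderPoly (intervals n) := by
  rw [Phi, coeff_mk]
  congr 1
  exact (finsum_subtype_eq_finsum_cond (f := fun p : PBT × PBT => Polynomial.X ^ Lb p.2) _).trans
    (finsum_mem_eq_finite_toFinset_sum _ _)

theorem coeff_phi (n : ℕ) : coeff n phi = if n = 0 then 0 else ((intervals n).card : ℚ[X]) := by
  rw [phi, coeff_mk, intervals, ← Nat.card_eq_card_finite_toFinset]
  rfl

theorem intervalSeries_eq : intervalSeries = C Polynomial.X + Phi := by
  ext n : 1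
  rw [intervalSeries, coeff_mk, map_add, coeff_Phi, coeff_C]
  rcases eq_or_ne n 0 with rfl | hn
  · simp [intervals_zero, borderPoly, Lb]
  · simp [hn]

theorem intervalCountSeries_eq : intervalCountSeries = 1 + phi := by
  ext n : 1
  rw [intervalCountSeries, coeff_mk, map_add, coeff_phi, coeff_one]
  rcases eq_or_ne n 0 with rfl | hn
  · simp [intervals_zero]
  · simp [hn]

theorem C_X_mul_Phi : C Polynomial.X * Phi = indecSeries * intervalSeries := by
  ext n
  rw [coeff_C_mul, coeff_Phi, coeff_mul]
  rcases eq_or_ne n 0 with rfl | hn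
  · simp [indecSeries, indecIntervals_zero, borderPoly]
  · simp only [if_neg hn, X_mul_borderPoly_intervals hn, indecSeries, intervalSeries, coeff_mk]

theorem indecSeries_mul_C : indecSeries * C (Polynomial.X - 1) =
    C (Polynomial.X ^ 2) * (X * (intervalSeries - intervalCountSeries)) := by
  ext n : 1
  rcases n with _ | n
  · simp [indecSeries, indecIntervals_zero, borderPoly]
  · rw [coeff_mul_C, coeff_C_mul, coeff_succ_X_mul, indecSeries, coeff_mk,
      borderPoly_indecIntervals_succ_mul, map_sub, intervalSeries, intervalCountSeries, coeff_mk,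
      coeff_mk, borderPoly, sum_sub_distrib, card_eq_sum_ones, Nat.cast_sum, Nat.cast_one]

/-- The functional equation `Φ = x²y (1 + Φ/x)(1 + (Φ−φ)/(x−1))`, written with
denominators cleared: `Φ·(x−1) = x·y·(x+Φ)·(x−1+Φ−φ)`. -/
theorem Phi_functional_equation :
    letI x : PowerSeries (Polynomial ℚ) := PowerSeries.C Polynomial.X
    letI y : PowerSeries (Polynomial ℚ) := PowerSeries.X
    Phi * (x - 1) = x * y * (x + Phi) * (x - 1 + Phi - phi) := by
  have hx : (C Polynomial.X : PowerSeries ℚ[X]) ≠ 0 :=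
    (map_ne_zero_iff _ C_injective).mpr Polynomial.X_ne_zero
  have hΦ := C_X_mul_Phi
  have hΨ := indecSeries_mul_C
  rw [intervalSeries_eq] at hΦ hΨ
  rw [intervalCountSeries_eq, map_sub, map_one, map_pow] at hΨ
  refine mul_left_cancel₀ hx ?_
  linear_combination (C Polynomial.X - 1) * hΦ + (C Polynomial.X + Phi) * hΨ
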